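/- Fix a finite simple graph F with k vertices and an exchangeable array as in the Aldous–Hoover representation: ζ_{i,j} = f(u, U_i, U_j, U_{i,j}) with (U_i) and (U_{i,j}) i.i.d. uniform on [0,1]. Then the expectation of the injective homomorphism density (1/n^{↓k}) Σ_{injective (i₁,…,i_k)} ∏_{{j,l}∈E(F)} f(u, U_{i_j}, U_{i_l}, U_{i_j, i_l}) equals t(F, g_u), where g_u(x,y) := E[f(u, x, y, V)] for V uniform on [0,1] and n^{↓k} := n!/(n−k)!. -/

import Mathlib

open MeasureTheory ProbabilityTheory Set

noncomputable section

open Classical in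
/-- The set of (ordered) edge pairs of a finite simple graph on `Fin k`. -/
def edgePairs {k : ℕ} (G : SimpleGraph (Fin k)) : Finset (Fin k × Fin k) :=
  Finset.univ.filter (fun p : Fin k × Fin k => p.1 < p.2 ∧ G.Adj p.1 p.2)

/-- The homomorphism density `t(F, g)`. -/
def homDensity {k : ℕ} (G : SimpleGraph (Fin k)) (W : ℝ → ℝ → ℝ) : ℝ :=
  ∫ x : Fin k → ℝ in Set.univ.pi (fun _ => Icc (0:ℝ) 1),
    ∏ p ∈ edgePairs G, W (x p.1) (x p.2)

/-!
For a fixed injection `ι`, the variables `U_{ι j}` (vertices `j`) and `U_{ι j, ι l}` (edges `jl`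
of `F`) are distinct members of the independent family, hence i.i.d. uniform on `[0,1]`. Each edge
variable occurs in exactly one factor of the product, so integrating the edge variables out first
replaces `f(u, x, y, U_{jl})` by `g_u(x, y)`, and the remaining integral over the vertex variables
is `t(F, g_u)`. Every one of the `n^{↓k}` terms of the sum therefore has expectation `t(F, g_u)`.
-/

theorem integrable_finset_prod_of_abs_le {α ι : Type*} [MeasurableSpace α] {μ : Measure α}
    [IsFiniteMeasure μ] (s : Finset ι) {g : ι → α → ℝ} (hg : ∀ i ∈ s, Measurable (g i)) (C : ℝ)
    (hC : ∀ i x, |g i x| ≤ C) : Integrable (fun x => ∏ i ∈ s, g i x) μ := by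
  refine .of_bound (Finset.measurable_prod s hg).aestronglyMeasurable (C ^ s.card)
    (.of_forall fun x => ?_)
  rw [Real.norm_eq_abs, Finset.abs_prod, ← Finset.prod_const]
  exact Finset.prod_le_prod (fun _ _ => abs_nonneg _) fun i _ => hC i x

theorem integral_pi_sum_prod_eq_integral_prod_integral {ι κ E : Type*} [Fintype ι] [Fintype κ]
    [MeasurableSpace E] (μ : Measure E) [IsFiniteMeasure μ] (h : κ → (ι → E) → E → ℝ)
    (hh : ∀ q, Measurable (Function.uncurry (h q))) (C : ℝ) (hC : ∀ q x v, |h q x v| ≤ C) :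
    ∫ x, ∏ q, h q (fun i => x (.inl i)) (x (.inr q)) ∂Measure.pi (fun _ : ι ⊕ κ => μ) =
      ∫ x, ∏ q, (∫ v, h q x v ∂μ) ∂Measure.pi (fun _ : ι => μ) := by
  rw [← (measurePreserving_sumPiEquivProdPi_symm fun _ : ι ⊕ κ => μ).integral_comp',
    integral_prod]
  · exact integral_congr_ae (.of_forall fun x => integral_fintype_prod_eq_prod (fun q => h q x))
  · refine integrable_finset_prod_of_abs_le _ (fun q _ => ?_) C fun q z => hC _ _ _
    exact (hh q).comp (measurable_fst.prodMk ((measurable_pi_apply q).comp measurable_snd))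

def sortPair {α β : Type*} [LinearOrder α] [LinearOrder β] (ι : α ↪ β)
    (p : {p : α × α // p.1 < p.2}) : {p : β × β // p.1 < p.2} :=
  ⟨(min (ι p.1.1) (ι p.1.2), max (ι p.1.1) (ι p.1.2)), min_lt_max.2 (ι.injective.ne p.2.ne)⟩

theorem sortPair_injective {α β : Type*} [LinearOrder α] [LinearOrder β] (ι : α ↪ β) :
    Function.Injective (sortPair ι) := by
  rintro ⟨⟨a, b⟩, hab⟩ ⟨⟨c, d⟩, hcd⟩ h
  simp only [sortPair, Subtype.mk.injEq, Prod.mk.injEq] at h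
  obtain ⟨hmin, hmax⟩ := h
  have hcases : (ι a = ι c ∧ ι b = ι d) ∨ (ι a = ι d ∧ ι b = ι c) := by
    rcases le_total (ι a) (ι b) with h₁ | h₁ <;> rcases le_total (ι c) (ι d) with h₂ | h₂ <;>
      simp_all
  rcases hcases with ⟨h₁, h₂⟩ | ⟨h₁, h₂⟩
  · exact Subtype.ext (Prod.ext (ι.injective h₁) (ι.injective h₂))
  · obtain rfl := ι.injective h₁
    obtain rfl := ι.injective h₂
    exact absurd hcd (lt_asymm hab)

theorem lt_of_mem_edgePairs {k : ℕ} {G : SimpleGraph (Fin k)} {p : Fin k × Fin k}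
    (hp : p ∈ edgePairs G) : p.1 < p.2 := by
  simp only [edgePairs, Finset.mem_filter] at hp
  exact hp.2.1

theorem apply_min_max_of_symm {α : Type*} {U : ℕ → ℕ → α} (hU : ∀ i j, U i j = U j i) (a b : ℕ) :
    U (min a b) (max a b) = U a b := by
  rcases le_total a b with hab | hab
  · rw [min_eq_left hab, max_eq_right hab]
  · rw [min_eq_right hab, max_eq_left hab, hU]

section Sampling

variable {Ω : Type*} [MeasurableSpace Ω] {P : Measure Ω}
  {k : ℕ} (F : SimpleGraph (Fin k)) (h : ℝ → ℝ → ℝ → ℝ)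
  (hh : Measurable fun q : ℝ × ℝ × ℝ => h q.1 q.2.1 q.2.2) (C : ℝ) (hC : ∀ x y v, |h x y v| ≤ C)
include hh hC

theorem integral_prod_edgePairs_eq_homDensity (X : Fin k ⊕ edgePairs F → Ω → ℝ)
    (hX : ∀ i, Measurable (X i)) (hindep : iIndepFun X P)
    (hunif : ∀ i, P.map (X i) = volume.restrict (Icc 0 1)) :
    ∫ ω, ∏ q : edgePairs F, h (X (.inl q.1.1) ω) (X (.inl q.1.2) ω) (X (.inr q) ω) ∂P =
      homDensity F (fun x y => ∫ v in Icc 0 1, h x y v) := by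
  have hlaw : P.map (fun ω i => X i ω) = Measure.pi fun _ => volume.restrict (Icc 0 1) := by
    rw [hindep.map_fun_eq_pi_map fun i => (hX i).aemeasurable]
    simp_rw [hunif]
  have hG : Measurable fun x : Fin k ⊕ edgePairs F → ℝ =>
      ∏ q : edgePairs F, h (x (.inl q.1.1)) (x (.inl q.1.2)) (x (.inr q)) :=
    Finset.measurable_prod _ fun q _ =>
      hh.comp (f := fun x : Fin k ⊕ edgePairs F → ℝ => (x (.inl q.1.1), x (.inl q.1.2), x (.inr q)))
        (by fun_prop)
  rw [← integral_map (measurable_pi_lambda _ hX).aemeasurable hG.aestronglyMeasurable, hlaw,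
    homDensity, volume_pi, Measure.restrict_pi_pi]
  refine (integral_pi_sum_prod_eq_integral_prod_integral _
    (fun (q : edgePairs F) (x : Fin k → ℝ) v => h (x q.1.1) (x q.1.2) v)
    (fun q => hh.comp (f := fun z : (Fin k → ℝ) × ℝ => (z.1 q.1.1, z.1 q.1.2, z.2)) (by fun_prop))
    C (fun q x v => hC _ _ _)).trans ?_
  exact integral_congr_ae (.of_forall fun x =>
    Finset.prod_coe_sort (edgePairs F) fun p => ∫ v in Icc (0:ℝ) 1, h (x p.1) (x p.2) v)

theorem integral_prod_edgePairs_embedding_eq_homDensity (Ui : ℕ → Ω → ℝ) (Uij : ℕ → ℕ → Ω → ℝ)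
    (hUsymm : ∀ i j, Uij i j = Uij j i)
    (hmeas₁ : ∀ i, Measurable (Ui i)) (hmeas₂ : ∀ i j, Measurable (Uij i j))
    (hindep : iIndepFun
      (Sum.elim Ui (fun p : {p : ℕ × ℕ // p.1 < p.2} => Uij p.1.1 p.1.2)) P)
    (hunif₁ : ∀ i, P.map (Ui i) = volume.restrict (Icc 0 1))
    (hunif₂ : ∀ i j, i < j → P.map (Uij i j) = volume.restrict (Icc 0 1)) (ι : Fin k ↪ ℕ) :
    ∫ ω, ∏ p ∈ edgePairs F, h (Ui (ι p.1) ω) (Ui (ι p.2) ω) (Uij (ι p.1) (ι p.2) ω) ∂P =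
      homDensity F (fun x y => ∫ v in Icc 0 1, h x y v) := by
  -- The edge variables are indexed by pairs `i < j`, so an edge of `F` is sent to the sorted pair
  -- of its images; by symmetry of `Uij` this carries the same variable.
  let g : Fin k ⊕ edgePairs F → ℕ ⊕ {p : ℕ × ℕ // p.1 < p.2} :=
    Sum.map ι fun q => sortPair ι ⟨q.1, lt_of_mem_edgePairs q.2⟩
  have hg : g.Injective := ι.injective.sumMap fun q r hqr =>
    Subtype.ext (Subtype.mk.inj (sortPair_injective ι hqr))
  rw [← integral_prod_edgePairs_eq_homDensity F h hh C hC _ (fun i => ?_) (hindep.precomp hg)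
    fun i => ?_]
  · refine integral_congr_ae (.of_forall fun ω => ?_)
    dsimp only
    rw [← Finset.prod_coe_sort]
    simp [g, sortPair, apply_min_max_of_symm hUsymm]
  · rcases i with i | q
    · exact hmeas₁ _
    · exact hmeas₂ _ _
  · rcases i with i | q
    · exact hunif₁ _
    · exact hunif₂ _ _ (sortPair ι _).2

end Sampling

theorem expected_injective_homDensity_general {Ω : Type*} [MeasurableSpace Ω]
    (P : Measure Ω) [IsProbabilityMeasure P]
    (f : ℝ → ℝ → ℝ → ℝ → ℝ)
    (hf_meas : Measurable (fun q : ℝ × ℝ × ℝ × ℝ => f q.1 q.2.1 q.2.2.1 q.2.2.2))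
    (hf_bdd : ∀ a x y v, f a x y v ∈ Icc (-1:ℝ) 1)
    (Ui : ℕ → Ω → ℝ) (Uij : ℕ → ℕ → Ω → ℝ)
    (hUsymm : ∀ i j, Uij i j = Uij j i)
    (hmeas₁ : ∀ i, Measurable (Ui i)) (hmeas₂ : ∀ i j, Measurable (Uij i j))
    (hindep : iIndepFun
      (Sum.elim Ui (fun p : {p : ℕ × ℕ // p.1 < p.2} => Uij p.1.1 p.1.2)) P)
    (hunif₁ : ∀ i, Measure.map (Ui i) P = volume.restrict (Icc (0:ℝ) 1))
    (hunif₂ : ∀ i j, i < j →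
      Measure.map (Uij i j) P = volume.restrict (Icc (0:ℝ) 1))
    (u : ℝ)
    {k n : ℕ} (hkn : k ≤ n) (F : SimpleGraph (Fin k)) :
    ∫ ω, (1 / (n.descFactorial k : ℝ)) *
        ∑ ι : Fin k ↪ Fin n, ∏ p ∈ edgePairs F,
          f u (Ui (ι p.1) ω) (Ui (ι p.2) ω) (Uij (ι p.1) (ι p.2) ω) ∂P =
      homDensity F (fun x y => ∫ v in Icc (0:ℝ) 1, f u x y v) := by
  have hfu : Measurable fun q : ℝ × ℝ × ℝ => f u q.1 q.2.1 q.2.2 :=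
    hf_meas.comp (f := fun q : ℝ × ℝ × ℝ => (u, q)) (by fun_prop)
  have hfu_bdd : ∀ x y v, |f u x y v| ≤ 1 := fun x y v => abs_le.2 (hf_bdd u x y v)
  have hint (ι : Fin k ↪ Fin n) : Integrable (fun ω => ∏ p ∈ edgePairs F,
      f u (Ui (ι p.1) ω) (Ui (ι p.2) ω) (Uij (ι p.1) (ι p.2) ω)) P :=
    integrable_finset_prod_of_abs_le _ (fun p _ => hfu.comp (f := fun ω =>
      (Ui (ι p.1) ω, Ui (ι p.2) ω, Uij (ι p.1) (ι p.2) ω)) (by fun_prop)) 1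
      fun p ω => hfu_bdd _ _ _
  have hterm (ι : Fin k ↪ Fin n) := integral_prod_edgePairs_embedding_eq_homDensity F (f u) hfu 1
    hfu_bdd Ui Uij hUsymm hmeas₁ hmeas₂ hindep hunif₁ hunif₂ (ι.trans Fin.valEmbedding)
  rw [integral_const_mul, integral_finsetSum _ fun ι _ => hint ι]
  simp only [Function.Embedding.trans_apply, Fin.valEmbedding_apply] at hterm
  rw [Finset.sum_congr rfl fun ι _ => hterm ι, Finset.sum_const, Finset.card_univ,
    Fintype.card_embedding_eq, Fintype.card_fin, Fintype.card_fin, nsmul_eq_mul, one_div,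
    inv_mul_cancel_left₀ (Nat.cast_ne_zero.2 (Nat.descFactorial_pos.2 hkn).ne')]

/-- in the Aldous–Hoover setting, the expected injective homomorphism
density of the sampled array `ζ_{i,j} = f(u, U_i, U_j, U_{i,j})` equals `t(F, g_u)`,
where `g_u(x,y) = E[f(u,x,y,V)]` for `V` uniform on `[0,1]`. -/
theorem expected_injective_homDensity {Ω : Type*} [MeasurableSpace Ω]
    (P : Measure Ω) [IsProbabilityMeasure P]
    (f : ℝ → ℝ → ℝ → ℝ → ℝ)
    (hf_meas : Measurable (fun q : ℝ × ℝ × ℝ × ℝ => f q.1 q.2.1 q.2.2.1 q.2.2.2))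
    (hf_bdd : ∀ a x y v, f a x y v ∈ Icc (-1:ℝ) 1)
    (hf_symm : ∀ a x y v, f a x y v = f a y x v)
    (Ui : ℕ → Ω → ℝ) (Uij : ℕ → ℕ → Ω → ℝ)
    (hUsymm : ∀ i j, Uij i j = Uij j i)
    (hmeas₁ : ∀ i, Measurable (Ui i)) (hmeas₂ : ∀ i j, Measurable (Uij i j))
    (hindep : iIndepFun
      (Sum.elim Ui (fun p : {p : ℕ × ℕ // p.1 < p.2} => Uij p.1.1 p.1.2)) P)
    (hunif₁ : ∀ i, Measure.map (Ui i) P = volume.restrict (Icc (0:ℝ) 1))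
    (hunif₂ : ∀ i j, i < j →
      Measure.map (Uij i j) P = volume.restrict (Icc (0:ℝ) 1))
    (u : ℝ) (hu : u ∈ Icc (0:ℝ) 1)
    {k n : ℕ} (hkn : k ≤ n) (F : SimpleGraph (Fin k)) :
    ∫ ω, (1 / (n.descFactorial k : ℝ)) *
        ∑ ι : Fin k ↪ Fin n, ∏ p ∈ edgePairs F,
          f u (Ui (ι p.1) ω) (Ui (ι p.2) ω) (Uij (ι p.1) (ι p.2) ω) ∂P =
      homDensity F (fun x y => ∫ v in Icc (0:ℝ) 1, f u x y v) :=
  expected_injective_homDensity_general P f hf_meas hf_bdd Ui Uij hUsymm hmeas₁ hmeas₂ hindep hunif₁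
    hunif₂ u hkn F
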